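/- Let A and B be complex polynomials with deg A = N ≥ 1, deg B = K ≥ 1, ‖A‖ ≤ 1, ‖B‖ ≤ 1, and δ(A,B) > 0. Then for every z ∈ ℂ, either |A(z)| ≥ δ(A,B)/3^N or |B(z)| ≥ δ(A,B)/3^K. -/

import Mathlib

open Polynomial

/-- The norm of a polynomial: the maximum of the moduli of its coefficients. -/
noncomputable def polyNorm (p : Polynomial ℂ) : ℝ :=
  ⨆ k : ℕ, ‖p.coeff k‖

/-- `δ(A,B)`: the minimum of `|A(z)| + |B(z)|` over all `z` that is a zero of `A` or of `B`. -/
noncomputable def bezoutDelta (A B : Polynomial ℂ) : ℝ :=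
  sInf ((fun z : ℂ => ‖A.eval z‖ + ‖B.eval z‖) ''
    {z : ℂ | A.eval z = 0 ∨ B.eval z = 0})

/-!
Let `p` be a root of `A` or of `B` nearest to `z`, say a root of `B`. Every root `r` of `A`
satisfies `|p - r| ≤ |p - z| + |z - r| ≤ 2 |z - r|`, so factoring `A` over its roots gives
`δ(A,B) ≤ |A(p)| ≤ 2^N |A(z)| ≤ 3^N |A(z)|`. Symmetrically if `p` is a root of `A`.
-/

namespace Polynomial

variable {𝕜 : Type*} [NormedField 𝕜] {P : 𝕜[X]}

theorem Splits.norm_eval_eq (hP : P.Splits) (x : 𝕜) :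
    ‖P.eval x‖ = ‖P.leadingCoeff‖ * (P.roots.map fun r => ‖x - r‖).prod := by
  rw [hP.eval_eq_prod_roots, norm_mul]
  exact congrArg _ ((map_multiset_prod (normHom (α := 𝕜)) _).trans
    (congrArg _ (Multiset.map_map _ _ _)))

theorem Splits.norm_eval_le_pow_card_roots_mul (hP : P.Splits) {w z : 𝕜} (c : ℝ)
    (h : ∀ r ∈ P.roots, ‖w - r‖ ≤ c * ‖z - r‖) :
    ‖P.eval w‖ ≤ c ^ P.roots.card * ‖P.eval z‖ := by
  have hprod : (P.roots.map fun r => ‖w - r‖).prod ≤ (P.roots.map fun r => c * ‖z - r‖).prod :=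
    Multiset.prod_map_le_prod_map₀ _ _ (fun _ _ => norm_nonneg _) h
  rw [Multiset.prod_map_mul, Multiset.map_const', Multiset.prod_replicate] at hprod
  rw [hP.norm_eval_eq, hP.norm_eval_eq, mul_left_comm]
  gcongr

theorem Splits.norm_eval_le_two_pow_mul_of_forall_norm_sub_le (hP : P.Splits) {p z : 𝕜}
    (hp : ∀ r ∈ P.roots, ‖z - p‖ ≤ ‖z - r‖) :
    ‖P.eval p‖ ≤ 2 ^ P.natDegree * ‖P.eval z‖ := by
  rw [← splits_iff_card_roots.mp hP]
  refine hP.norm_eval_le_pow_card_roots_mul 2 fun r hr => ?_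
  calc ‖p - r‖ ≤ ‖p - z‖ + ‖z - r‖ := norm_sub_le_norm_sub_add_norm_sub p z r
    _ ≤ 2 * ‖z - r‖ := by rw [norm_sub_rev p z]; linarith [hp r hr]

end Polynomial

theorem bezoutDelta_le_norm_eval_left {A B : ℂ[X]} {β : ℂ} (hβ : B.eval β = 0) :
    bezoutDelta A B ≤ ‖A.eval β‖ := by
  have hbdd : BddBelow ((fun z : ℂ => ‖A.eval z‖ + ‖B.eval z‖) ''
      {z : ℂ | A.eval z = 0 ∨ B.eval z = 0}) :=
    ⟨0, by rintro _ ⟨u, _, rfl⟩; positivity⟩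
  calc bezoutDelta A B ≤ ‖A.eval β‖ + ‖B.eval β‖ := csInf_le hbdd ⟨β, Or.inr hβ, rfl⟩
    _ = ‖A.eval β‖ := by rw [hβ, norm_zero, add_zero]

theorem bezoutDelta_comm (A B : ℂ[X]) : bezoutDelta A B = bezoutDelta B A := by
  simp only [bezoutDelta, add_comm ‖A.eval _‖, or_comm]

theorem bezoutDelta_le_norm_eval_right {A B : ℂ[X]} {α : ℂ} (hα : A.eval α = 0) :
    bezoutDelta A B ≤ ‖B.eval α‖ :=
  bezoutDelta_comm A B ▸ bezoutDelta_le_norm_eval_left hα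

theorem bezoutDelta_le_two_pow_mul_norm_eval_or {A B : ℂ[X]} (hA : 0 < A.natDegree) (z : ℂ) :
    bezoutDelta A B ≤ 2 ^ A.natDegree * ‖A.eval z‖ ∨
      bezoutDelta A B ≤ 2 ^ B.natDegree * ‖B.eval z‖ := by
  have hroots : (A.roots + B.roots).toFinset.Nonempty := by
    rw [Multiset.toFinset_nonempty, ← Multiset.card_pos, Multiset.card_add,
      IsAlgClosed.card_roots_eq_natDegree]
    omega
  obtain ⟨p, hp, hnearest⟩ := (A.roots + B.roots).toFinset.exists_min_image (‖z - ·‖) hroots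
  have hclosest (r) (hr : r ∈ A.roots + B.roots) : ‖z - p‖ ≤ ‖z - r‖ :=
    hnearest r (Multiset.mem_toFinset.mpr hr)
  rcases Multiset.mem_add.mp (Multiset.mem_toFinset.mp hp) with hpA | hpB
  · refine .inr ((bezoutDelta_le_norm_eval_right (mem_roots'.mp hpA).2).trans ?_)
    exact (IsAlgClosed.splits B).norm_eval_le_two_pow_mul_of_forall_norm_sub_le
      fun r hr => hclosest r (Multiset.mem_add.mpr (.inr hr))
  · refine .inl ((bezoutDelta_le_norm_eval_left (mem_roots'.mp hpB).2).trans ?_)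
    exact (IsAlgClosed.splits A).norm_eval_le_two_pow_mul_of_forall_norm_sub_le
      fun r hr => hclosest r (Multiset.mem_add.mpr (.inl hr))

theorem lower_bound_everywhere_general (N K : ℕ) (hN : 1 ≤ N)
    (A B : Polynomial ℂ) (hA : A.natDegree = N) (hB : B.natDegree = K) :
    ∀ z : ℂ,
      bezoutDelta A B / 3 ^ N ≤ ‖A.eval z‖ ∨
      bezoutDelta A B / 3 ^ K ≤ ‖B.eval z‖ := by
  intro z
  have hpow (n : ℕ) (x : ℝ) (hx : 0 ≤ x) : 2 ^ n * x ≤ 3 ^ n * x := by gcongr; norm_num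
  rcases bezoutDelta_le_two_pow_mul_norm_eval_or (B := B) (hA ▸ hN) z with h | h
  · rw [hA] at h
    exact .inl ((div_le_iff₀' (by positivity)).mpr (h.trans (hpow N _ (norm_nonneg _))))
  · rw [hB] at h
    exact .inr ((div_le_iff₀' (by positivity)).mpr (h.trans (hpow K _ (norm_nonneg _))))

/-- If `deg A = N ≥ 1`, `deg B = K ≥ 1`, `‖A‖ ≤ 1`, `‖B‖ ≤ 1` and `δ(A,B) > 0`, then for
every `z ∈ ℂ` either `|A(z)| ≥ δ(A,B)/3^N` or `|B(z)| ≥ δ(A,B)/3^K`. -/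
theorem lower_bound_everywhere (N K : ℕ) (hN : 1 ≤ N) (hK : 1 ≤ K)
    (A B : Polynomial ℂ) (hA : A.natDegree = N) (hB : B.natDegree = K)
    (hnA : polyNorm A ≤ 1) (hnB : polyNorm B ≤ 1)
    (hδ : 0 < bezoutDelta A B) :
    ∀ z : ℂ,
      bezoutDelta A B / 3 ^ N ≤ ‖A.eval z‖ ∨
      bezoutDelta A B / 3 ^ K ≤ ‖B.eval z‖ :=
  lower_bound_everywhere_general N K hN A B hA hB
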